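/- arXiv:2110.07708 — 5 statements merged into one kernel-verified Lean document; each statement's English description precedes it below -/
import Mathlib

section
/- Let A be a unital C*-algebra, φ a state on A, and u ∈ A a unitary element. Define the state ψ on A by ψ(x) = φ(u* x u). If there exists a sequence (a_k) in A with 0 ≤ a_k ≤ 1 for every k such that lim_k ψ(a_k) = 0 and lim_k φ(1 − a_k) = 0, then φ(u) = 0. -/
/-!
Write `φ u = φ (a k * u) + φ ((1 - a k) * u)`. Cauchy–Schwarz for the sesquilinear form
`(x, y) ↦ φ (x⋆ y)`, applied to `√c` and `√c u`, gives `|φ (c u)|² ≤ φ c · φ (u⋆ c u)` for `0 ≤ c`.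
For `c = a k` the right side is at most `ψ (a k)`, for `c = 1 - a k` at most `φ (1 - a k)`, since
all of `a k`, `1 - a k` and their conjugates by `u` lie between `0` and `1`. Both summands
therefore tend to `0`, while their sum is constantly `φ u`.
-/

open scoped ComplexOrder
open Filter Topology

namespace PositiveLinearMap

variable {A : Type*} [CStarAlgebra A] [PartialOrder A] (f : A →ₚ[ℂ] ℂ)

theorem re_apply_le_one (hf : f 1 = 1) {c : A} (hc : c ≤ 1) : (f c).re ≤ 1 := by
  simpa [hf] using (Complex.le_def.mp (OrderHomClass.mono f hc)).1

theorem re_apply_nonneg {c : A} (hc : 0 ≤ c) : 0 ≤ (f c).re :=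
  (Complex.nonneg_iff.mp (f.map_nonneg hc)).1

variable [StarOrderedRing A]

theorem norm_apply_star_mul_sq_le (x y : A) :
    ‖f (star x * y)‖ ^ 2 ≤ (f (star x * x)).re * (f (star y * y)).re := by
  have h := norm_inner_le_norm (𝕜 := ℂ) (f.toPreGNS x) (f.toPreGNS y)
  rw [preGNS_inner_def, preGNS_norm_def, preGNS_norm_def] at h
  calc ‖f (star x * y)‖ ^ 2 ≤ (√(f (star x * x)).re * √(f (star y * y)).re) ^ 2 :=
        pow_le_pow_left₀ (norm_nonneg _) h 2
    _ = _ := by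
        rw [mul_pow, Real.sq_sqrt (f.re_apply_nonneg (star_mul_self_nonneg x)),
          Real.sq_sqrt (f.re_apply_nonneg (star_mul_self_nonneg y))]

theorem norm_apply_mul_sq_le {c : A} (hc : 0 ≤ c) (x : A) :
    ‖f (c * x)‖ ^ 2 ≤ (f c).re * (f (star x * c * x)).re := by
  set s := CFC.sqrt c
  have hs : star s = s := (CFC.sqrt_nonneg c).isSelfAdjoint.star_eq
  have hss : s * s = c := CFC.sqrt_mul_sqrt_self c hc
  have h := f.norm_apply_star_mul_sq_le s (s * x)
  rwa [hs, ← mul_assoc, hss, star_mul, hs, mul_assoc, ← mul_assoc s, hss, ← mul_assoc] at h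

theorem norm_apply_mul_sq_le_re_apply_conj (hf : f 1 = 1) {c : A} (hc0 : 0 ≤ c) (hc1 : c ≤ 1)
    (x : A) : ‖f (c * x)‖ ^ 2 ≤ (f (star x * c * x)).re := by
  have hconj : 0 ≤ (f (star x * c * x)).re := f.re_apply_nonneg (star_left_conjugate_nonneg hc0 x)
  calc ‖f (c * x)‖ ^ 2 ≤ (f c).re * (f (star x * c * x)).re := f.norm_apply_mul_sq_le hc0 x
    _ ≤ 1 * (f (star x * c * x)).re := by gcongr; exact f.re_apply_le_one hf hc1
    _ = _ := one_mul _

theorem norm_apply_mul_sq_le_re_apply (hf : f 1 = 1) {c : A} (hc : 0 ≤ c) {x : A}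
    (hx : star x * c * x ≤ 1) : ‖f (c * x)‖ ^ 2 ≤ (f c).re := by
  have hfc : 0 ≤ (f c).re := f.re_apply_nonneg hc
  calc ‖f (c * x)‖ ^ 2 ≤ (f c).re * (f (star x * c * x)).re := f.norm_apply_mul_sq_le hc x
    _ ≤ (f c).re * 1 := by gcongr; exact f.re_apply_le_one hf hx
    _ = _ := mul_one _

end PositiveLinearMap

theorem tendsto_zero_of_norm_sq_le {ι E : Type*} [SeminormedAddCommGroup E] {l : Filter ι}
    {z : ι → E} {r : ι → ℝ} (hr : Tendsto r l (𝓝 0)) (h : ∀ i, ‖z i‖ ^ 2 ≤ r i) :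
    Tendsto z l (𝓝 0) := by
  refine squeeze_zero_norm (fun i => Real.le_sqrt_of_sq_le (h i)) ?_
  simpa using hr.sqrt

theorem Complex.tendsto_re_zero {ι : Type*} {l : Filter ι} {z : ι → ℂ}
    (hz : Tendsto z l (𝓝 0)) : Tendsto (fun i => (z i).re) l (𝓝 0) := by
  simpa only [Function.comp_def, Complex.zero_re] using (Complex.continuous_re.tendsto 0).comp hz

/-- Let `A` be a unital C*-algebra, `φ` a state on `A`, and `u ∈ A` a
unitary element. Define the state `ψ` on `A` by `ψ x = φ (u* x u)`. If there exists a
sequence `(a k)` in `A` with `0 ≤ a k ≤ 1` for every `k` such that `ψ (a k) → 0` and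
`φ (1 - a k) → 0`, then `φ u = 0`. -/
theorem stmt_0 {A : Type*} [NormedRing A] [StarRing A] [CStarRing A]
    [NormedAlgebra ℂ A] [CompleteSpace A] [StarModule ℂ A]
    [PartialOrder A] [StarOrderedRing A]
    (φ : A →ₗ[ℂ] ℂ) (hφ1 : φ 1 = 1) (hφpos : ∀ a : A, 0 ≤ a → 0 ≤ φ a)
    (u : A) (hu : u ∈ unitary A)
    (ψ : A → ℂ) (hψ : ∀ x : A, ψ x = φ (star u * x * u))
    (a : ℕ → A) (ha0 : ∀ k, 0 ≤ a k) (ha1 : ∀ k, a k ≤ 1)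
    (hlim1 : Filter.Tendsto (fun k => ψ (a k)) Filter.atTop (nhds 0))
    (hlim2 : Filter.Tendsto (fun k => φ (1 - a k)) Filter.atTop (nhds 0)) :
    φ u = 0 := by
  let _ : CStarAlgebra A := {}
  let f := PositiveLinearMap.mk₀ φ hφpos
  have hsplit : ∀ k, φ (a k * u) + φ ((1 - a k) * u) = φ u := fun k => by
    rw [← map_add, ← add_mul, add_sub_cancel, one_mul]
  have h1 : Tendsto (fun k => φ (a k * u)) atTop (𝓝 0) :=
    tendsto_zero_of_norm_sq_le (Complex.tendsto_re_zero hlim1) fun k => by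
      rw [hψ]
      exact f.norm_apply_mul_sq_le_re_apply_conj hφ1 (ha0 k) (ha1 k) u
  have h2 : Tendsto (fun k => φ ((1 - a k) * u)) atTop (𝓝 0) :=
    tendsto_zero_of_norm_sq_le (Complex.tendsto_re_zero hlim2) fun k => by
      refine f.norm_apply_mul_sq_le_re_apply hφ1 (sub_nonneg.mpr (ha1 k)) ?_
      calc star u * (1 - a k) * u ≤ star u * 1 * u :=
            star_left_conjugate_le_conjugate (sub_le_self 1 (ha0 k)) u
        _ = 1 := by rw [mul_one, Unitary.star_mul_self_of_mem hu]
  simpa using (h1.add h2).congr hsplit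
end

section
/- Let Γ be a countable discrete group acting measurably on a probability space (B, ν), let A be a unital C*-algebra, let π : Γ → A be a group homomorphism taking values in the unitary group of A, and let b ↦ β_b be a map assigning to each b ∈ B a state β_b on A. Fix γ ∈ Γ and assume: (i) for ν-almost every b ∈ B one has β_{γ·b}(x) = β_b(π(γ)* x π(γ)) for all x ∈ A; and (ii) for ν-almost every b ∈ B the states β_{γ·b} and β_b are pairwise singular. Then β_b(π(γ)) = 0 for ν-almost every b ∈ B. -/
/-!
Write `u = a u + (1 - a) u` for `0 ≤ a ≤ 1`. Cauchy–Schwarz for the positive functional `φ`,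
applied to `√a` and `√a u`, bounds `|φ (a u)|` by `√(φ a) · √(φ (u* a u))`, and likewise for
`1 - a`. Along a sequence witnessing the singularity of `φ (u* · u)` and `φ`, both products
tend to `0`, so `φ u = 0`.
-/

open scoped ComplexOrder
open MeasureTheory Filter

def PairwiseSingular {A : Type*} [Ring A] [Module ℂ A] [PartialOrder A] (φ ψ : A →ₗ[ℂ] ℂ) :
    Prop :=
  ∃ a : ℕ → A, (∀ k, 0 ≤ a k ∧ a k ≤ 1) ∧ Tendsto (fun k => φ (a k)) atTop (nhds 0) ∧
    Tendsto (fun k => ψ (1 - a k)) atTop (nhds 0)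

namespace PositiveLinearMap

variable {A : Type*} [CStarAlgebra A] [PartialOrder A] [StarOrderedRing A] (f : A →ₚ[ℂ] ℂ)

lemma norm_apply_mul_le {c : A} (hc : 0 ≤ c) (u : A) :
    ‖f (c * u)‖ ≤ √(f c).re * √(f (star u * c * u)).re := by
  set s := CFC.sqrt c
  have hs : star s = s := (IsSelfAdjoint.of_nonneg (CFC.sqrt_nonneg c)).star_eq
  have hss : s * s = c := CFC.sqrt_mul_sqrt_self c hc
  have h := norm_inner_le_norm (𝕜 := ℂ) (f.toPreGNS s) (f.toPreGNS (s * u))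
  simp only [preGNS_inner_def, preGNS_norm_def, ofPreGNS_toPreGNS, star_mul, hs] at h
  rwa [mul_assoc, ← mul_assoc s, hss, ← mul_assoc] at h

lemma apply_eq_zero_of_tendsto {u : A} {a : ℕ → A} (ha₀ : ∀ k, 0 ≤ a k) (ha₁ : ∀ k, a k ≤ 1)
    (hconj : Tendsto (fun k => f (star u * a k * u)) atTop (nhds 0))
    (hcompl : Tendsto (fun k => f (1 - a k)) atTop (nhds 0)) :
    f u = 0 := by
  have hbound (k : ℕ) : ‖f u‖ ≤ √(f (a k)).re * √(f (star u * a k * u)).re +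
      √(f (1 - a k)).re * √(f (star u * (1 - a k) * u)).re := calc
    ‖f u‖ = ‖f (a k * u) + f ((1 - a k) * u)‖ := by
      rw [← map_add, ← add_mul, add_sub_cancel, one_mul]
    _ ≤ _ := (norm_add_le _ _).trans <| add_le_add (f.norm_apply_mul_le (ha₀ k) u)
        (f.norm_apply_mul_le (sub_nonneg.mpr (ha₁ k)) u)
  have hfa : Tendsto (fun k => f (a k)) atTop (nhds (f 1)) := by
    simpa using hcompl.const_sub (f 1)
  have hconj_compl : Tendsto (fun k => f (star u * (1 - a k) * u)) atTop
      (nhds (f (star u * u))) := by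
    simpa [mul_sub, sub_mul] using hconj.const_sub (f (star u * u))
  have sqrt_re {g : ℕ → ℂ} {z : ℂ} (hg : Tendsto g atTop (nhds z)) :
      Tendsto (fun k => √(g k).re) atTop (nhds √z.re) :=
    ((Complex.continuous_re.tendsto z).comp hg).sqrt
  have hlim : Tendsto (fun k => √(f (a k)).re * √(f (star u * a k * u)).re +
      √(f (1 - a k)).re * √(f (star u * (1 - a k) * u)).re) atTop (nhds 0) := by
    simpa using ((sqrt_re hfa).mul (sqrt_re hconj)).add
      ((sqrt_re hcompl).mul (sqrt_re hconj_compl))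
  exact norm_le_zero_iff.mp (ge_of_tendsto' hlim hbound)

lemma apply_eq_zero_of_pairwiseSingular {ψ : A →ₗ[ℂ] ℂ} {u : A}
    (hψ : ∀ x, ψ x = f (star u * x * u)) (h : PairwiseSingular ψ f.toLinearMap) : f u = 0 := by
  obtain ⟨a, ha, hψa, hf⟩ := h
  refine f.apply_eq_zero_of_tendsto (fun k => (ha k).1) (fun k => (ha k).2) ?_ hf
  simpa only [hψ] using hψa

end PositiveLinearMap

theorem stmt_1_general {Γ : Type*} [Group Γ]
    {B : Type*} [MeasurableSpace B] (ν : Measure B)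
    [MulAction Γ B]
    {A : Type*} [NormedRing A] [StarRing A] [CStarRing A]
    [NormedAlgebra ℂ A] [CompleteSpace A] [StarModule ℂ A]
    [PartialOrder A] [StarOrderedRing A]
    (π : Γ →* unitary A)
    (β : B → (A →ₗ[ℂ] ℂ))
    (hβstate : ∀ b : B, β b 1 = 1 ∧ ∀ a : A, 0 ≤ a → 0 ≤ β b a)
    (γ : Γ)
    (hequiv : ∀ᵐ b ∂ν, ∀ x : A, β (γ • b) x = β b (star (π γ : A) * x * (π γ : A)))
    (hsing : ∀ᵐ b ∂ν, ∃ a : ℕ → A, (∀ k, 0 ≤ a k ∧ a k ≤ 1) ∧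
      Tendsto (fun k => β (γ • b) (a k)) atTop (nhds 0) ∧
      Tendsto (fun k => β b (1 - a k)) atTop (nhds 0)) :
    ∀ᵐ b ∂ν, β b (π γ : A) = 0 := by
  let _ : CStarAlgebra A := { ‹NormedRing A›, ‹StarRing A›, ‹CompleteSpace A›, ‹CStarRing A›,
    ‹NormedAlgebra ℂ A›, ‹StarModule ℂ A› with }
  filter_upwards [hequiv, hsing] with b hconj hsing_b
  exact (PositiveLinearMap.mk₀ (β b) (hβstate b).2).apply_eq_zero_of_pairwiseSingular
    hconj hsing_b

/-- Let `Γ` be a countable discrete group acting measurably on a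
probability space `(B, ν)`, `A` a unital C*-algebra, `π : Γ → A` a group homomorphism
into the unitary group of `A`, and `b ↦ β b` an assignment of states on `A`.
Fix `γ ∈ Γ` and assume: (i) for `ν`-a.e. `b`, `β (γ • b) x = β b (π(γ)* x π(γ))` for all
`x`; (ii) for `ν`-a.e. `b`, the states `β (γ • b)` and `β b` are pairwise singular.
Then `β b (π γ) = 0` for `ν`-a.e. `b`. -/
theorem stmt_1 {Γ : Type*} [Group Γ] [Countable Γ]
    {B : Type*} [MeasurableSpace B] (ν : Measure B) [IsProbabilityMeasure ν]
    [MulAction Γ B] (hact : ∀ γ : Γ, Measurable fun b : B => γ • b)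
    {A : Type*} [NormedRing A] [StarRing A] [CStarRing A]
    [NormedAlgebra ℂ A] [CompleteSpace A] [StarModule ℂ A]
    [PartialOrder A] [StarOrderedRing A]
    (π : Γ →* unitary A)
    (β : B → (A →ₗ[ℂ] ℂ))
    (hβstate : ∀ b : B, β b 1 = 1 ∧ ∀ a : A, 0 ≤ a → 0 ≤ β b a)
    (γ : Γ)
    (hequiv : ∀ᵐ b ∂ν, ∀ x : A, β (γ • b) x = β b (star (π γ : A) * x * (π γ : A)))
    (hsing : ∀ᵐ b ∂ν, ∃ a : ℕ → A, (∀ k, 0 ≤ a k ∧ a k ≤ 1) ∧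
      Tendsto (fun k => β (γ • b) (a k)) atTop (nhds 0) ∧
      Tendsto (fun k => β b (1 - a k)) atTop (nhds 0)) :
    ∀ᵐ b ∂ν, β b (π γ : A) = 0 :=
  stmt_1_general ν π β hβstate γ hequiv hsing
end

section
/- Let Λ be a countable discrete group acting measurably on a standard Borel probability space (X, ν) by measure-preserving transformations. For γ ∈ Λ set Fix(γ) = {x ∈ X : γ·x = x}. Then the function φ : Λ → ℂ defined by φ(γ) = ν(Fix(γ)) is a character of Λ: φ(e) = 1, φ is positive definite, and φ(γ⁻¹ g γ) = φ(g) for all γ, g ∈ Λ. -/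
/-!
For `g, h ∈ Λ` we have `Fix(g⁻¹ h) = {x | g • x = h • x}`, so for fixed `x` the matrix
`(φ(gⱼ⁻¹ gᵢ))` is, before integration, the indicator of `gᵢ • x = gⱼ • x`. That kernel
`[aᵢ = aⱼ]` is positive semidefinite, and integrating over `x` preserves this. Conjugation
invariance holds because `Fix(γ⁻¹ g γ)` is the preimage of `Fix(g)` under the
measure-preserving map `x ↦ γ • x`.
-/

open scoped ComplexOrder
open MeasureTheory

/-- A function `φ : Λ → ℂ` on a group is positive definite if for every `n`, all
`g : Fin n → Λ` and `c : Fin n → ℂ`, the sum `∑ i j, c i * conj (c j) * φ ((g j)⁻¹ * g i)`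
is a nonnegative real number. -/
def IsPosDefFn {Λ : Type*} [Group Λ] (φ : Λ → ℂ) : Prop :=
  ∀ (n : ℕ) (g : Fin n → Λ) (c : Fin n → ℂ),
    0 ≤ ∑ i, ∑ j, c i * (starRingEnd ℂ) (c j) * φ ((g j)⁻¹ * g i)

open Finset in
/-- Grouping the indices into the fibres of `f`, the sum is `∑ₖ |∑_{f i = k} c i|²`. -/
theorem sum_sum_mul_conj_mul_ite_eq_nonneg {ι κ : Type*} [Fintype ι] [DecidableEq κ]
    (f : ι → κ) (c : ι → ℂ) :
    0 ≤ ∑ i, ∑ j, c i * (starRingEnd ℂ) (c j) * (if f i = f j then 1 else 0) := by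
  set d : κ → ℂ := fun k => ∑ j with f j = k, c j
  have hfibre : ∀ i, ∑ j, c i * (starRingEnd ℂ) (c j) * (if f i = f j then 1 else 0) =
      c i * (starRingEnd ℂ) (d (f i)) := by
    intro i
    simp only [d, map_sum, mul_sum, sum_filter]
    refine sum_congr rfl fun j _ => ?_
    by_cases h : f i = f j
    · simp [h]
    · simp [h, Ne.symm h]
  calc (0 : ℂ) ≤ ∑ k ∈ univ.image f, d k * (starRingEnd ℂ) (d k) :=
        sum_nonneg fun k _ => by rw [Complex.mul_conj]; exact_mod_cast Complex.normSq_nonneg _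
    _ = ∑ k ∈ univ.image f, ∑ i with f i = k, c i * (starRingEnd ℂ) (d (f i)) := by
        refine sum_congr rfl fun k _ => ?_
        rw [sum_mul]
        exact sum_congr rfl fun i hi => by rw [(mem_filter.mp hi).2]
    _ = _ := by
        rw [sum_fiberwise_of_maps_to fun i _ => mem_image_of_mem f (mem_univ i)]
        exact (sum_congr rfl fun i _ => hfibre i).symm

theorem sum_sum_mul_conj_mul_measureReal_eq_nonneg {X κ ι : Type*} [MeasurableSpace X]
    [MeasurableSpace κ] [MeasurableEq κ] [Fintype ι] (ν : Measure X) [IsFiniteMeasure ν]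
    (u : ι → X → κ) (hu : ∀ i, Measurable (u i)) (c : ι → ℂ) :
    0 ≤ ∑ i, ∑ j, c i * (starRingEnd ℂ) (c j) * (ν.real {x | u i x = u j x} : ℂ) := by
  classical
  have hreal : ∀ i j, (ν.real {x | u i x = u j x} : ℂ) =
      ∫ x, (if u i x = u j x then 1 else 0 : ℂ) ∂ν := by
    intro i j
    simpa [Set.indicator_apply] using
      (integral_indicator_const (μ := ν) (1 : ℂ) (measurableSet_eq_fun (hu i) (hu j))).symm
  have hint : ∀ i j, Integrable (fun x => (if u i x = u j x then 1 else 0 : ℂ)) ν := fun i j =>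
    (integrable_const (1 : ℂ)).indicator (measurableSet_eq_fun (hu i) (hu j))
  calc (0 : ℂ) ≤ ∫ x, ∑ i, ∑ j, c i * (starRingEnd ℂ) (c j) *
        (if u i x = u j x then 1 else 0) ∂ν :=
        integral_nonneg fun x => sum_sum_mul_conj_mul_ite_eq_nonneg (fun i => u i x) c
    _ = _ := by
        rw [integral_finsetSum _ fun i _ =>
          integrable_finsetSum _ fun j _ => (hint i j).const_mul _]
        refine Finset.sum_congr rfl fun i _ => ?_
        rw [integral_finsetSum _ fun j _ => (hint i j).const_mul _]
        exact Finset.sum_congr rfl fun j _ => by rw [integral_const_mul, hreal]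

theorem setOf_inv_mul_smul_eq_self {G X : Type*} [Group G] [MulAction G X] (g h : G) :
    {x : X | (g⁻¹ * h) • x = x} = {x | h • x = g • x} := by
  ext x
  simp only [Set.mem_ofPred_eq, mul_smul, inv_smul_eq_iff]

theorem measure_setOf_conj_smul_eq_self {G X : Type*} [Group G] [MulAction G X]
    [MeasurableSpace X] [MeasurableEq X] {ν : Measure X} {g : G}
    (hg : Measurable fun x : X => g • x) (γ : G)
    (hγ : MeasurePreserving (fun x : X => γ • x) ν ν) :
    ν {x | (γ⁻¹ * g * γ) • x = x} = ν {x | g • x = x} := by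
  have hpreimage : {x : X | (γ⁻¹ * g * γ) • x = x} = (γ • ·) ⁻¹' {y | g • y = y} := by
    ext x
    simp only [Set.mem_ofPred_eq, Set.mem_preimage, mul_smul, inv_smul_eq_iff]
  have hfix : MeasurableSet {y : X | g • y = y} := measurableSet_eq_fun hg measurable_id
  rw [hpreimage, hγ.measure_preimage hfix.nullMeasurableSet]

theorem stmt_2_general {Λ : Type*} [Group Λ]
    {X : Type*} [MeasurableSpace X] [StandardBorelSpace X]
    (ν : Measure X) [IsProbabilityMeasure ν]
    [MulAction Λ X] (hmeas : ∀ γ : Λ, Measurable fun x : X => γ • x)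
    (hpres : ∀ γ : Λ, MeasurePreserving (fun x : X => γ • x) ν ν) :
    (fun γ : Λ => ((ν {x : X | γ • x = x}).toReal : ℂ)) 1 = 1 ∧
    IsPosDefFn (fun γ : Λ => ((ν {x : X | γ • x = x}).toReal : ℂ)) ∧
    (∀ γ g : Λ, ((ν {x : X | (γ⁻¹ * g * γ) • x = x}).toReal : ℂ) =
      ((ν {x : X | g • x = x}).toReal : ℂ)) := by
  refine ⟨by simp, fun n g c => ?_, fun γ g => ?_⟩
  · simp only [setOf_inv_mul_smul_eq_self]
    exact sum_sum_mul_conj_mul_measureReal_eq_nonneg ν (fun i x => g i • x)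
      (fun i => hmeas (g i)) c
  · rw [measure_setOf_conj_smul_eq_self (hmeas g) γ (hpres γ)]

/-- Let `Λ` be a countable discrete group acting measurably on a standard
Borel probability space `(X, ν)` by measure-preserving transformations. Then
`φ : γ ↦ ν (Fix γ)` is a character of `Λ`: `φ 1 = 1`, `φ` is positive definite, and
`φ (γ⁻¹ * g * γ) = φ g` for all `γ, g`. -/
theorem stmt_2 {Λ : Type*} [Group Λ] [Countable Λ]
    {X : Type*} [MeasurableSpace X] [StandardBorelSpace X]
    (ν : Measure X) [IsProbabilityMeasure ν]
    [MulAction Λ X] (hmeas : ∀ γ : Λ, Measurable fun x : X => γ • x)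
    (hpres : ∀ γ : Λ, MeasurePreserving (fun x : X => γ • x) ν ν) :
    (fun γ : Λ => ((ν {x : X | γ • x = x}).toReal : ℂ)) 1 = 1 ∧
    IsPosDefFn (fun γ : Λ => ((ν {x : X | γ • x = x}).toReal : ℂ)) ∧
    (∀ γ g : Λ, ((ν {x : X | (γ⁻¹ * g * γ) • x = x}).toReal : ℂ) =
      ((ν {x : X | g • x = x}).toReal : ℂ)) :=
  stmt_2_general ν hmeas hpres
end

section
/- Let Λ be a countable discrete group acting on a complex Banach space E by linear isometries, with the dual action on the continuous dual E* given by (γ·c)(x) = c(γ⁻¹·x). Let μ : Λ → [0,1] satisfy Σ_{γ∈Λ} μ(γ) = 1, and let 𝒞 ⊆ E* be a nonempty Λ-invariant convex subset that is compact in the weak-* topology. Then there exists a μ-stationary point c ∈ 𝒞, that is, for every x ∈ E the series Σ_{γ∈Λ} μ(γ)·(γ·c)(x) converges absolutely and equals c(x). -/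
/-!
The μ-average of the dual action is the transpose of the Markov operator
`P x = ∑ γ, μ γ • ρ γ⁻¹ x`, which converges in `E`. Transposition by `P` is a real-linear map,
continuous for pointwise convergence, and it maps the compact convex set `𝒞` into itself, since
`c ∘ P` is a limit of convex combinations of translates of `c`. A fixed point then comes from the
Markov–Kakutani argument: Cesàro averages of an orbit are asymptotically invariant because `𝒞`
is bounded, and any of their cluster points is fixed.
-/

open Filter Topology

theorem Convex.mem_of_hasSum {V : Type*} [AddCommGroup V] [Module ℝ V] [TopologicalSpace V]
    [ContinuousSMul ℝ V] {s : Set V} (hs : Convex ℝ s) (hsc : IsClosed s) {ι : Type*}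
    {w : ι → ℝ} {z : ι → V} {v : V} (hw₀ : ∀ i, 0 ≤ w i) (hw₁ : HasSum w 1)
    (hz : ∀ i, z i ∈ s) (hv : HasSum (fun i => w i • z i) v) : v ∈ s := by
  have hmass : Tendsto (fun F : Finset ι => F.centerMass w z) atTop (𝓝 v) := by
    simpa [Finset.centerMass] using (hw₁.inv₀ one_ne_zero).smul hv
  refine hsc.mem_of_tendsto hmass ?_
  filter_upwards [hw₁.eventually (lt_mem_nhds one_pos)] with F hF
  exact hs.centerMass_mem (fun i _ => hw₀ i) hF fun i _ => hz i

/-- Markov–Kakutani for a single map. -/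
theorem ContinuousLinearMap.exists_fixedPoint_of_mapsTo {V : Type*} [AddCommGroup V] [Module ℝ V]
    [TopologicalSpace V] [IsTopologicalAddGroup V] [ContinuousSMul ℝ V] [T2Space V]
    {K : Set V} (hKc : IsCompact K) (hKv : Convex ℝ K) (hKne : K.Nonempty)
    (L : V →L[ℝ] V) (hLK : Set.MapsTo L K K) : ∃ v ∈ K, L v = v := by
  obtain ⟨v₀, hv₀⟩ := hKne
  set t : ℕ → ℝ := fun n => ((n : ℝ) + 1)⁻¹
  set A : ℕ → V := fun n => t n • ∑ k ∈ Finset.range (n + 1), L^[k] v₀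
  have hiter : ∀ k, L^[k] v₀ ∈ K := fun k => hLK.iterate k hv₀
  have hA : ∀ n, A n ∈ K := fun n => by
    have := hKv.centerMass_mem (t := Finset.range (n + 1)) (w := fun _ => (1 : ℝ))
      (fun _ _ => zero_le_one) (by simp; positivity) (fun k _ => hiter k)
    simpa [Finset.centerMass, t, A] using this
  have hdrift : ∀ n, L (A n) - A n = t n • L^[n + 1] v₀ - t n • v₀ := fun n => by
    have hstep : ∀ k, L (L^[k] v₀) = L^[k + 1] v₀ := fun k =>
      (Function.iterate_succ_apply' L k v₀).symm
    simp only [A, map_smul, map_sum, hstep, ← smul_sub, ← Finset.sum_sub_distrib,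
      Finset.sum_range_sub (fun k => L^[k] v₀), Function.iterate_zero_apply]
  have ht : Tendsto t atTop (𝓝 0) := by
    simpa [one_div] using tendsto_one_div_add_atTop_nhds_zero_nat (𝕜 := ℝ)
  have hbdd := hKc.isVonNBounded ℝ
  have hdrift₀ : Tendsto (fun n => L (A n) - A n) atTop (𝓝 0) := by
    simp only [hdrift]
    simpa using (hbdd.smul_tendsto_zero (.of_forall fun n => hiter (n + 1)) ht).sub
      (hbdd.smul_tendsto_zero (.of_forall fun _ => hv₀) ht)
  obtain ⟨v, hvK, hv⟩ := hKc.exists_clusterPt (f := map A atTop)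
    (le_principal_iff.2 (mem_map.2 (Eventually.of_forall hA)))
  have hcl : ClusterPt (L v - v) (𝓝 0) := by
    refine (hv.map (L.continuous.sub continuous_id).continuousAt tendsto_map).mono ?_
    rw [Filter.map_map]
    exact hdrift₀
  refine ⟨v, hvK, sub_eq_zero.1 ?_⟩
  by_contra hne
  exact hcl.ne (disjoint_nhds_nhds.2 hne).eq_bot

def ContinuousLinearMap.funLeft (R M : Type*) [Semiring R] [AddCommMonoid M] [Module R M]
    [TopologicalSpace M] {m n : Type*} (f : m → n) : (n → M) →L[R] (m → M) :=
  ⟨LinearMap.funLeft R M f, continuous_pi fun i => continuous_apply (f i)⟩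

section Markov

variable {Λ E : Type*} [Group Λ] [NormedAddCommGroup E] [NormedSpace ℂ E]

noncomputable def markovOperator (ρ : Λ →* (E ≃ₗᵢ[ℂ] E)) (μ : Λ → ℝ) (x : E) : E :=
  ∑' γ, μ γ • ρ γ⁻¹ x

variable (ρ : Λ →* (E ≃ₗᵢ[ℂ] E)) {μ : Λ → ℝ}

theorem hasSum_markovOperator [CompleteSpace E] (hμ₀ : ∀ γ, 0 ≤ μ γ) (hμ : Summable μ)
    (x : E) : HasSum (fun γ => μ γ • ρ γ⁻¹ x) (markovOperator ρ μ x) := by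
  refine (Summable.of_norm_bounded (hμ.mul_right ‖x‖) fun γ => ?_).hasSum
  rw [norm_smul, LinearIsometryEquiv.norm_map, Real.norm_of_nonneg (hμ₀ γ)]

theorem hasSum_apply_markovOperator [CompleteSpace E] (hμ₀ : ∀ γ, 0 ≤ μ γ) (hμ : Summable μ)
    (c : E →L[ℂ] ℂ) (x : E) :
    HasSum (fun γ => (μ γ : ℂ) * c (ρ γ⁻¹ x)) (c (markovOperator ρ μ x)) := by
  simpa [Complex.real_smul] using (hasSum_markovOperator ρ hμ₀ hμ x).mapL c

theorem summable_mul_norm_apply (hμ₀ : ∀ γ, 0 ≤ μ γ) (hμ : Summable μ) (c : E →L[ℂ] ℂ)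
    (x : E) : Summable (fun γ => μ γ * ‖c (ρ γ⁻¹ x)‖) := by
  refine Summable.of_nonneg_of_le (fun γ => mul_nonneg (hμ₀ γ) (norm_nonneg _))
    (fun γ => ?_) (hμ.mul_right (‖c‖ * ‖x‖))
  gcongr
  · exact hμ₀ γ
  simpa using c.le_opNorm (ρ γ⁻¹ x)

theorem mapsTo_funLeft_markovOperator [CompleteSpace E] (hμ₀ : ∀ γ, 0 ≤ μ γ)
    (hμ : HasSum μ 1) {𝒞 : Set (E →L[ℂ] ℂ)}
    (hconv : Convex ℝ ((fun c : E →L[ℂ] ℂ => (c : E → ℂ)) '' 𝒞))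
    (hclosed : IsClosed ((fun c : E →L[ℂ] ℂ => (c : E → ℂ)) '' 𝒞))
    (hinv : ∀ γ : Λ, ∀ c ∈ 𝒞, c.comp (ρ γ⁻¹).toLinearIsometry.toContinuousLinearMap ∈ 𝒞) :
    Set.MapsTo (ContinuousLinearMap.funLeft ℝ ℂ (markovOperator ρ μ))
      ((fun c : E →L[ℂ] ℂ => (c : E → ℂ)) '' 𝒞) ((fun c : E →L[ℂ] ℂ => (c : E → ℂ)) '' 𝒞) := by
  rintro _ ⟨c, hc, rfl⟩
  refine hconv.mem_of_hasSum hclosed hμ₀ hμ (z := fun γ => ⇑(c.comp _))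
    (fun γ => ⟨_, hinv γ c hc, rfl⟩) (Pi.hasSum.2 fun x => ?_)
  show HasSum (fun γ => μ γ • c (ρ γ⁻¹ x)) (c (markovOperator ρ μ x))
  simpa [Complex.real_smul] using hasSum_apply_markovOperator ρ hμ₀ hμ.summable c x

end Markov

theorem stmt_7_general {Λ : Type*} [Group Λ]
    {E : Type*} [NormedAddCommGroup E] [NormedSpace ℂ E] [CompleteSpace E]
    (ρ : Λ →* (E ≃ₗᵢ[ℂ] E))
    (μ : Λ → ℝ) (hμ0 : ∀ γ, 0 ≤ μ γ) (hμsum : HasSum μ 1)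
    (𝒞 : Set (E →L[ℂ] ℂ)) (h𝒞ne : 𝒞.Nonempty) (h𝒞conv : Convex ℝ 𝒞)
    (h𝒞inv : ∀ γ : Λ, ∀ c ∈ 𝒞,
      c.comp (ρ γ⁻¹).toLinearIsometry.toContinuousLinearMap ∈ 𝒞)
    (h𝒞cpt : IsCompact ((fun c : E →L[ℂ] ℂ => (c : E → ℂ)) '' 𝒞)) :
    ∃ c ∈ 𝒞, ∀ x : E,
      Summable (fun γ : Λ => μ γ * ‖c (ρ γ⁻¹ x)‖) ∧
      HasSum (fun γ : Λ => (μ γ : ℂ) * c (ρ γ⁻¹ x)) (c x) := by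
  have hconv : Convex ℝ ((fun c : E →L[ℂ] ℂ => (c : E → ℂ)) '' 𝒞) :=
    h𝒞conv.is_linear_image ⟨fun _ _ => rfl, fun _ _ => rfl⟩
  obtain ⟨_, ⟨c, hc, rfl⟩, hfix⟩ :=
    (ContinuousLinearMap.funLeft ℝ ℂ (markovOperator ρ μ)).exists_fixedPoint_of_mapsTo
      h𝒞cpt hconv (h𝒞ne.image _)
      (mapsTo_funLeft_markovOperator ρ hμ0 hμsum hconv h𝒞cpt.isClosed h𝒞inv)
  have hstat : ∀ x, c (markovOperator ρ μ x) = c x := congrFun hfix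
  exact ⟨c, hc, fun x => ⟨summable_mul_norm_apply ρ hμ0 hμsum.summable c x,
    hstat x ▸ hasSum_apply_markovOperator ρ hμ0 hμsum.summable c x⟩⟩

/-- Let `Λ` be a countable discrete group acting on a complex Banach
space `E` by linear isometries (a homomorphism `ρ : Λ →* (E ≃ₗᵢ[ℂ] E)`), with dual action
on `E*` given by `(γ · c) x = c (ρ γ⁻¹ x)`.  Let `μ : Λ → [0,1]` with `∑ γ, μ γ = 1`, and
let `𝒞 ⊆ E*` be a nonempty `Λ`-invariant convex subset that is compact in the weak-*
topology (equivalently, its image in `E → ℂ` under the coercion is compact in the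
topology of pointwise convergence).  Then there exists a `μ`-stationary point `c ∈ 𝒞`:
for every `x ∈ E` the series `∑ γ, μ γ * (γ · c) x` converges absolutely and equals
`c x`. -/
theorem stmt_7 {Λ : Type*} [Group Λ] [Countable Λ]
    {E : Type*} [NormedAddCommGroup E] [NormedSpace ℂ E] [CompleteSpace E]
    [TopologicalSpace.SeparableSpace E]
    (ρ : Λ →* (E ≃ₗᵢ[ℂ] E))
    (μ : Λ → ℝ) (hμ0 : ∀ γ, 0 ≤ μ γ) (hμ1 : ∀ γ, μ γ ≤ 1) (hμsum : HasSum μ 1)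
    (𝒞 : Set (E →L[ℂ] ℂ)) (h𝒞ne : 𝒞.Nonempty) (h𝒞conv : Convex ℝ 𝒞)
    (h𝒞inv : ∀ γ : Λ, ∀ c ∈ 𝒞,
      c.comp (ρ γ⁻¹).toLinearIsometry.toContinuousLinearMap ∈ 𝒞)
    (h𝒞cpt : IsCompact ((fun c : E →L[ℂ] ℂ => (c : E → ℂ)) '' 𝒞)) :
    ∃ c ∈ 𝒞, ∀ x : E,
      Summable (fun γ : Λ => μ γ * ‖c (ρ γ⁻¹ x)‖) ∧
      HasSum (fun γ : Λ => (μ γ : ℂ) * c (ρ γ⁻¹ x)) (c x) :=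
  stmt_7_general ρ μ hμ0 hμsum 𝒞 h𝒞ne h𝒞conv h𝒞inv h𝒞cpt
end

section
/- Let H be a locally compact second countable topological group with a left Haar measure m, and let μ be a Borel probability measure on H that is absolutely continuous with respect to m. Let F : H → ℂ be a bounded Borel measurable function that is right μ-harmonic, i.e. F(g) = ∫_H F(gh) dμ(h) for every g ∈ H. Then F is continuous. -/
/-!
Write `dμ = ρ dm`. Left invariance of `m` turns harmonicity into `F g = ∫ ρ (g⁻¹ y) • F y dm`,
i.e. `F` is the pairing of the bounded function `F ∈ L^∞(m)` with the left translate of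
`ρ ∈ L¹(m)` by `g`. Translation acts continuously on `L¹` of a regular Haar measure, and the
pairing is a continuous functional, so `F` is continuous.
-/

open MeasureTheory

theorem integral_mul_left_eq_integral_rnDeriv_smul {G E : Type*} [Group G] [MeasurableSpace G]
    [MeasurableMul G] [NormedAddCommGroup E] [NormedSpace ℝ E]
    (m : Measure G) [m.IsMulLeftInvariant] [SigmaFinite m] {μ : Measure G} [SigmaFinite μ]
    (hμm : μ ≪ m) (F : G → E) (g : G) :
    ∫ h, F (g * h) ∂μ = ∫ y, (μ.rnDeriv m (g⁻¹ * y)).toReal • F y ∂m := by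
  rw [← integral_rnDeriv_smul hμm, ← integral_mul_left_eq_self _ g⁻¹]
  simp only [mul_inv_cancel_left]

theorem continuous_integral_comp_inv_mul_smul {G E : Type*} [Group G] [TopologicalSpace G]
    [IsTopologicalGroup G] [MeasurableSpace G] [BorelSpace G]
    [NormedAddCommGroup E] [NormedSpace ℝ E] [CompleteSpace E]
    (m : Measure G) [m.IsMulLeftInvariant] [IsLocallyFiniteMeasure m]
    [m.InnerRegularCompactLTTop] {φ : G → ℝ} (hφ : Integrable φ m) {F : G → E}
    (hF : MemLp F ⊤ m) :
    Continuous fun g ↦ ∫ y, φ (g⁻¹ * y) • F y ∂m := by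
  set Φ : Lp ℝ 1 m := hφ.toL1 φ
  set pairing := (ContinuousLinearMap.lsmul ℝ ℝ : ℝ →L[ℝ] E →L[ℝ] E).lpPairing m 1 ⊤
  have h_eq : (fun g ↦ ∫ y, φ (g⁻¹ * y) • F y ∂m) =
      fun g ↦ pairing (DomMulAct.mk g⁻¹ • Φ) (hF.toLp F) := by
    ext g
    rw [ContinuousLinearMap.lpPairing_eq_integral]
    have hΦ : ((DomMulAct.mk g⁻¹ • Φ : Lp ℝ 1 m) : G → ℝ) =ᵐ[m] fun y ↦ φ (g⁻¹ * y) :=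
      (DomMulAct.smul_Lp_ae_eq _ _).trans <|
        (measurePreserving_mul_left m g⁻¹).quasiMeasurePreserving.ae_eq_comp
          hφ.coeFn_toL1
    refine integral_congr_ae ?_
    filter_upwards [hΦ, hF.coeFn_toLp] with y hΦy hFy
    simp only [ContinuousLinearMap.lsmul_apply, hΦy, hFy]
  have : Fact ((1 : ENNReal) ≠ ⊤) := ⟨ENNReal.one_ne_top⟩
  have h_translate : Continuous fun g : G ↦ DomMulAct.mk g⁻¹ • Φ :=
    (DomMulAct.mkHomeomorph.continuous.comp continuous_inv).smul continuous_const
  rw [h_eq]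
  exact (pairing.continuous.comp h_translate).clm_apply continuous_const

/-- Let `H` be a locally compact second countable topological group
with a left Haar measure `m`, and `μ` a Borel probability measure on `H` absolutely
continuous with respect to `m`.  Let `F : H → ℂ` be a bounded Borel measurable function
that is right `μ`-harmonic, i.e. `F g = ∫ F (g * h) dμ h` for every `g`.  Then `F` is
continuous. -/
theorem stmt_10 {H : Type*} [Group H] [TopologicalSpace H] [IsTopologicalGroup H]
    [LocallyCompactSpace H] [SecondCountableTopology H]
    [MeasurableSpace H] [BorelSpace H]
    (m : Measure H) [m.IsHaarMeasure]
    (μ : Measure H) [IsProbabilityMeasure μ] (hac : μ ≪ m)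
    (F : H → ℂ) (hF : Measurable F) (C : ℝ) (hFC : ∀ g, ‖F g‖ ≤ C)
    (hharm : ∀ g : H, F g = ∫ h, F (g * h) ∂μ) :
    Continuous F := by
  have h_conv : F = fun g ↦ ∫ y, (μ.rnDeriv m (g⁻¹ * y)).toReal • F y ∂m :=
    funext fun g ↦ (hharm g).trans (integral_mul_left_eq_integral_rnDeriv_smul m hac F g)
  rw [h_conv]
  exact continuous_integral_comp_inv_mul_smul m Measure.integrable_toReal_rnDeriv
    (memLp_top_of_bound hF.aestronglyMeasurable C (.of_forall hFC))
end
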